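/- Let X be a topologically transitive subshift. Suppose x₁, x₂ ∈ X, F ⊆ ℤ²\{0} is finite, φ ∈ Aut(X), and for m = 1, 2 let V_{x_m} be the set of vectors in F that are period vectors of η_{φ,x_m}. If V_{x_1} ∩ V_{x_2} = ∅ and every η_{φ,x} (x ∈ X) has a period vector in F, then we reach a contradiction; hence V_{x_1} ∩ V_{x_2} ≠ ∅ whenever both are determined this way. -/

import Mathlib

open Filter Topology

/-- The shift by `k`: `(shiftZ k x) i = x (i + k)`. `shiftZ 1` is the left shift `σ`. -/
def shiftZ {A : Type*} (k : ℤ) (x : ℤ → A) : ℤ → A := fun i => x (i + k)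

/-- A subshift: a closed, shift-invariant subset of `A^ℤ`. -/
def IsSubshift {A : Type*} [TopologicalSpace A] (X : Set (ℤ → A)) : Prop :=
  IsClosed X ∧ ∀ (k : ℤ), ∀ x ∈ X, shiftZ k x ∈ X

/-- `wordCount X n` = number of words of length `n` occurring (at the origin) in points of `X`. -/
noncomputable def wordCount {A : Type*} (X : Set (ℤ → A)) (n : ℕ) : ℕ :=
  Set.ncard { w : Fin n → A | ∃ x ∈ X, ∀ i : Fin n, x (i.val : ℤ) = w i }

/-- `ptWordCount x n` = number of words of length `n` occurring in the single point `x`. -/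
noncomputable def ptWordCount {A : Type*} (x : ℤ → A) (n : ℕ) : ℕ :=
  Set.ncard { w : Fin n → A | ∃ a : ℤ, ∀ i : Fin n, x (a + (i.val : ℤ)) = w i }

/-- `patternCount η n k` = number of `n × k` rectangular patterns occurring in `η : ℤ² → A`. -/
noncomputable def patternCount {A : Type*} (η : ℤ × ℤ → A) (n k : ℕ) : ℕ :=
  Set.ncard { β : Fin n × Fin k → A | ∃ a b : ℤ,
    ∀ p : Fin n × Fin k, η (a + (p.1.val : ℤ), b + (p.2.val : ℤ)) = β p }

/-- Subquadratic growth: `liminf P_X(n)/n² = 0`. -/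
def Subquadratic {A : Type*} (X : Set (ℤ → A)) : Prop :=
  Filter.atTop.liminf (fun n : ℕ => (wordCount X n : ℝ) / (n : ℝ) ^ 2) = 0

/-- Topological transitivity: some point of `X` has dense shift-orbit in `X`. -/
def TopTransitive {A : Type*} [TopologicalSpace A] (X : Set (ℤ → A)) : Prop :=
  ∃ x ∈ X, ∀ y ∈ X, y ∈ closure { z | ∃ k : ℤ, z = shiftZ k x }

/-- `φ` is a sliding block code of range `N`: `(φ x)(i)` is determined by `x(i-N)⋯x(i+N)`. -/
def HasRange {A : Type*} (X : Set (ℤ → A)) (φ : {x // x ∈ X} → {x // x ∈ X}) (N : ℕ) : Prop :=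
  ∀ x y : {x // x ∈ X}, ∀ i : ℤ,
    (∀ j : ℤ, i - (N : ℤ) ≤ j → j ≤ i + (N : ℤ) → x.val j = y.val j) →
      (φ x).val i = (φ y).val i

/-- `φ` commutes with the shift `σ` on `X` (stated extensionally on the subtype). -/
def CommutesWithShift {A : Type*} (X : Set (ℤ → A))
    (φ : {x // x ∈ X} → {x // x ∈ X}) : Prop :=
  ∀ x y : {x // x ∈ X}, y.val = shiftZ 1 x.val → (φ y).val = shiftZ 1 (φ x).val

/-- The `ℤ²`-configuration `η_{φ,x}(i,j) = (φ^j x)(i)`. -/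
def eta {A : Type*} (X : Set (ℤ → A)) (φ : Equiv.Perm {x // x ∈ X})
    (x : {x // x ∈ X}) : ℤ × ℤ → A := fun p => ((φ ^ p.2) x).val p.1

/-!
The set of points `x` for which `η_{φ,x}` has a given period vector `v` is closed (a block code
is continuous, and on the compact space `X` so is its inverse, hence each `x ↦ η_{φ,x}(w)` is
continuous) and shift-invariant (`φ` commutes with `σ`, so `η_{φ,σᵐx}` is a horizontal
translate of `η_{φ,x}`). A point with dense orbit has some period vector `v ∈ F`; hence every
point of `X` does, in particular `x₁` and `x₂`.
-/

section Shift

variable {A : Type*}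

theorem shiftZ_zero (x : ℤ → A) : shiftZ 0 x = x := by
  funext i
  simp [shiftZ]

theorem shiftZ_shiftZ (a b : ℤ) (x : ℤ → A) : shiftZ a (shiftZ b x) = shiftZ (a + b) x := by
  funext i
  simp only [shiftZ, add_assoc]

variable (X : Set (ℤ → A)) (hX : ∀ k : ℤ, ∀ x ∈ X, shiftZ k x ∈ X)

def shiftPerm : Equiv.Perm X where
  toFun x := ⟨shiftZ 1 x, hX 1 x x.2⟩
  invFun x := ⟨shiftZ (-1) x, hX (-1) x x.2⟩
  left_inv x := by ext1; simp [shiftZ_shiftZ, shiftZ_zero]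
  right_inv x := by ext1; simp [shiftZ_shiftZ, shiftZ_zero]

theorem shiftPerm_zpow_apply (m : ℤ) (x : X) : ((shiftPerm X hX ^ m) x).val = shiftZ m x.val := by
  induction m using Int.induction_on generalizing x with
  | zero => simp [shiftZ_zero]
  | succ m ih =>
    rw [zpow_add_one, Equiv.Perm.mul_apply, ih]
    exact shiftZ_shiftZ _ 1 x.val
  | pred m ih =>
    rw [zpow_sub_one, Equiv.Perm.mul_apply, ih]
    exact shiftZ_shiftZ _ (-1) x.val

variable {X}

theorem commute_shiftPerm {φ : Equiv.Perm X} (hcomm : CommutesWithShift X φ) :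
    Commute φ (shiftPerm X hX) :=
  Equiv.ext fun x => Subtype.ext (hcomm x (shiftPerm X hX x) rfl)

theorem eta_shiftPerm_zpow {φ : Equiv.Perm X} (hcomm : CommutesWithShift X φ) (m : ℤ) (x : X)
    (w : ℤ × ℤ) : eta X φ ((shiftPerm X hX ^ m) x) w = eta X φ x (w + (m, 0)) := by
  have hc : (φ ^ w.2) ((shiftPerm X hX ^ m) x) = (shiftPerm X hX ^ m) ((φ ^ w.2) x) :=
    Equiv.congr_fun ((commute_shiftPerm hX hcomm).zpow_zpow w.2 m).eq x
  simp only [eta, hc, shiftPerm_zpow_apply, Prod.fst_add, Prod.snd_add, add_zero]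
  rfl

theorem periodic_eta_shiftPerm_zpow {φ : Equiv.Perm X} (hcomm : CommutesWithShift X φ)
    {x : X} {v : ℤ × ℤ} (h : Function.Periodic (eta X φ x) v) (m : ℤ) :
    Function.Periodic (eta X φ ((shiftPerm X hX ^ m) x)) v := fun w => by
  rw [eta_shiftPerm_zpow hX hcomm, eta_shiftPerm_zpow hX hcomm, add_right_comm]
  exact h _

theorem TopTransitive.exists_dense_orbit [TopologicalSpace A] (htr : TopTransitive X) :
    ∃ ξ : X, Dense (Set.range fun m : ℤ => (shiftPerm X hX ^ m) ξ) := by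
  obtain ⟨ξ, hξ, hdense⟩ := htr
  refine ⟨⟨ξ, hξ⟩, fun y => closure_subtype.2 ?_⟩
  convert hdense y y.2 using 2
  ext z
  simp [← Set.range_comp, shiftPerm_zpow_apply, eq_comm]

end Shift

theorem IsSubshift.compactSpace {A : Type*} [Finite A] [TopologicalSpace A] {X : Set (ℤ → A)}
    (hX : IsSubshift X) : CompactSpace X :=
  isCompact_iff_compactSpace.mp hX.1.isCompact

section Topology

variable {A : Type*} [TopologicalSpace A] [DiscreteTopology A] {X : Set (ℤ → A)}

theorem HasRange.continuous {ψ : X → X} {N : ℕ} (hr : HasRange X ψ N) : Continuous ψ := by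
  refine continuous_induced_rng.2 (continuous_pi fun i => ?_)
  refine ((IsLocallyConstant.iff_exists_open _).2 fun x => ?_).continuous
  refine ⟨Subtype.val ⁻¹' (Set.Icc (i - N) (i + N)).pi fun j => {x.val j},
    (isOpen_set_pi (Set.finite_Icc _ _) fun _ _ => isOpen_discrete _).preimage
      continuous_subtype_val, fun _ _ => rfl, fun y hy => ?_⟩
  exact hr y x i fun j h₁ h₂ => hy j ⟨h₁, h₂⟩

theorem Equiv.Perm.continuous_zpow {Y : Type*} [TopologicalSpace Y] [CompactSpace Y]
    [T2Space Y] {φ : Equiv.Perm Y} (hφ : Continuous φ) (j : ℤ) : Continuous ⇑(φ ^ j) := by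
  have hinv : Continuous ⇑φ⁻¹ := hφ.continuous_symm_of_equiv_compact_to_t2
  induction j using Int.induction_on with
  | zero => exact continuous_id
  | succ j ih => rw [zpow_add_one, Equiv.Perm.coe_mul]; exact ih.comp hφ
  | pred j ih => rw [zpow_sub_one, Equiv.Perm.coe_mul]; exact ih.comp hinv

theorem isClosed_setOf_periodic_eta {φ : Equiv.Perm X} (hφ : ∀ j : ℤ, Continuous ⇑(φ ^ j))
    (v : ℤ × ℤ) : IsClosed {x : X | Function.Periodic (eta X φ x) v} := by
  have hcont : ∀ p : ℤ × ℤ, Continuous fun x : X => eta X φ x p := fun p =>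
    (continuous_apply p.1).comp (continuous_subtype_val.comp (hφ p.2))
  simp only [Function.Periodic, Set.ofPred_forall]
  exact isClosed_iInter fun w => isClosed_eq (hcont _) (hcont _)

end Topology

theorem stmt17_general {A : Type*} [Finite A] [TopologicalSpace A] [DiscreteTopology A]
    (X : Set (ℤ → A)) (hX : IsSubshift X) (htr : TopTransitive X)
    (φ : Equiv.Perm {x // x ∈ X}) (hcomm : CommutesWithShift X φ) (N : ℕ)
    (hr : HasRange X φ N)
    (x₁ x₂ : {x // x ∈ X}) (F : Finset (ℤ × ℤ))
    (hper : ∀ x : {x // x ∈ X}, ∃ v ∈ F, ∀ w : ℤ × ℤ, eta X φ x (w + v) = eta X φ x w)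
    (hdisj : ∀ v ∈ F, ¬((∀ w : ℤ × ℤ, eta X φ x₁ (w + v) = eta X φ x₁ w) ∧
      (∀ w : ℤ × ℤ, eta X φ x₂ (w + v) = eta X φ x₂ w))) :
    False := by
  obtain ⟨ξ, hξ⟩ := htr.exists_dense_orbit hX.2
  obtain ⟨v, hvF, hξv⟩ := hper ξ
  have : CompactSpace X := hX.compactSpace
  have hclosed := isClosed_setOf_periodic_eta (Equiv.Perm.continuous_zpow hr.continuous) v
  have horbit : Set.range (fun m : ℤ => (shiftPerm X hX.2 ^ m) ξ) ⊆
      {x : X | Function.Periodic (eta X φ x) v} := by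
    rintro _ ⟨m, rfl⟩
    exact periodic_eta_shiftPerm_zpow hX.2 hcomm hξv m
  have hall : ∀ x : X, Function.Periodic (eta X φ x) v := fun x =>
    closure_minimal horbit hclosed (hξ x)
  exact hdisj v hvF ⟨hall x₁, hall x₂⟩

/-- if every `η_{φ,x}` has a period vector in `F` but the sets of `F`-period
vectors of `η_{φ,x₁}` and `η_{φ,x₂}` are disjoint, we reach a contradiction. -/
theorem stmt17 {A : Type*} [Finite A] [TopologicalSpace A] [DiscreteTopology A]
    (X : Set (ℤ → A)) (hX : IsSubshift X) (htr : TopTransitive X)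
    (φ : Equiv.Perm {x // x ∈ X}) (hcomm : CommutesWithShift X φ) (N : ℕ)
    (hr : HasRange X φ N)
    (x₁ x₂ : {x // x ∈ X}) (F : Finset (ℤ × ℤ)) (h0 : ((0, 0) : ℤ × ℤ) ∉ F)
    (hper : ∀ x : {x // x ∈ X}, ∃ v ∈ F, ∀ w : ℤ × ℤ, eta X φ x (w + v) = eta X φ x w)
    (hdisj : ∀ v ∈ F, ¬((∀ w : ℤ × ℤ, eta X φ x₁ (w + v) = eta X φ x₁ w) ∧
      (∀ w : ℤ × ℤ, eta X φ x₂ (w + v) = eta X φ x₂ w))) :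
    False :=
  stmt17_general X hX htr φ hcomm N hr x₁ x₂ F hper hdisj
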